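/- Let a and b be nonempty finite types with decidable equality, d_a := card a. Let H : Matrix a a ℂ be Hermitian, L : Matrix b b ℂ →ₗ[ℂ] Matrix b b ℂ a linear map with Tr[L X] = 0 for all X, and let η be a positive definite matrix of trace 1 on a and ρ, τ positive definite matrices of trace 1 on b. Then −Re Tr[(−i • ((H ⊗ₖ 1) * (η ⊗ₖ ρ) − (η ⊗ₖ ρ) * (H ⊗ₖ 1)) + η ⊗ₖ (L ρ)) * (log(η ⊗ₖ ρ) − log((1/d_a : ℝ) • (1 ⊗ₖ τ)))] = −Re Tr[(L ρ) * (log ρ − log τ)]. -/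

import Mathlib

open Matrix Kronecker
open scoped ComplexOrder

/-- matrix logarithm via the continuous functional calculus -/
noncomputable def mlog {n : Type*} [Fintype n] [DecidableEq n] (A : Matrix n n ℂ) :
    Matrix n n ℂ := cfc Real.log A

/-! Both logarithms are Kronecker sums: `exp` turns `K ⊗ 1 + 1 ⊗ M` into `exp K ⊗ exp M`, so
`log (η ⊗ ρ) = log η ⊗ 1 + 1 ⊗ log ρ`, and `log ((1/d) • (1 ⊗ τ)) = 1 ⊗ (log τ - log d)`.
Against a Kronecker sum the trace of `X ⊗ Y` splits as `Tr (X log η) Tr Y + Tr X Tr (Y M)`.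
The Hamiltonian part has `X = [H, η]`, whose trace and trace against `log η` vanish because `η`
commutes with `log η`; the dissipative part has `Tr η = 1` and `Tr (L ρ) = 0`, and the latter also
kills the constant `log d`. -/

section MatrixLog

variable {n : Type*} [Fintype n] [DecidableEq n]

open scoped Matrix.Norms.L2Operator MatrixOrder

lemma commute_mlog_self (A : Matrix n n ℂ) : Commute (mlog A) A :=
  (Commute.refl A).cfc_real Real.log

lemma isHermitian_mlog (A : Matrix n n ℂ) : (mlog A).IsHermitian :=
  IsSelfAdjoint.log

lemma mlog_one : mlog (1 : Matrix n n ℂ) = 0 :=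
  CFC.log_one

lemma Matrix.PosDef.exp_mlog {A : Matrix n n ℂ} (hA : A.PosDef) :
    NormedSpace.exp (mlog A) = A :=
  CFC.exp_log A hA.isStrictlyPositive

lemma Matrix.IsHermitian.mlog_exp {A : Matrix n n ℂ} (hA : A.IsHermitian) :
    mlog (NormedSpace.exp A) = A :=
  CFC.log_exp A hA.isSelfAdjoint

lemma Matrix.PosDef.mlog_smul {A : Matrix n n ℂ} (hA : A.PosDef) {r : ℝ} (hr : 0 < r) :
    mlog (r • A) = Real.log r • (1 : Matrix n n ℂ) + mlog A := by
  rw [← Algebra.algebraMap_eq_smul_one]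
  exact CFC.log_smul' A hr hA.isStrictlyPositive

end MatrixLog

namespace Matrix

section KroneckerSum

variable {R a b : Type*}

lemma IsHermitian.kronecker [CommRing R] [StarRing R] {A : Matrix a a R} {B : Matrix b b R}
    (hA : A.IsHermitian) (hB : B.IsHermitian) : (A ⊗ₖ B).IsHermitian := by
  rw [IsHermitian, conjTranspose_kronecker, hA.eq, hB.eq]

lemma sub_kronecker [Ring R] {l m n p : Type*} (A B : Matrix l m R) (C : Matrix n p R) :
    (A - B) ⊗ₖ C = A ⊗ₖ C - B ⊗ₖ C := by
  ext
  simp only [kroneckerMap_apply, sub_apply, sub_mul]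

variable [DecidableEq a] [DecidableEq b]

def kroneckerSum [Semiring R] (A : Matrix a a R) (B : Matrix b b R) : Matrix (a × b) (a × b) R :=
  A ⊗ₖ 1 + 1 ⊗ₖ B

lemma IsHermitian.kroneckerSum [CommRing R] [StarRing R] {A : Matrix a a R} {B : Matrix b b R}
    (hA : A.IsHermitian) (hB : B.IsHermitian) : (kroneckerSum A B).IsHermitian :=
  (hA.kronecker isHermitian_one).add (isHermitian_one.kronecker hB)

lemma kroneckerSum_sub_one_kronecker [Ring R] (A : Matrix a a R) (B C : Matrix b b R) :
    kroneckerSum A B - 1 ⊗ₖ C = kroneckerSum A (B - C) := by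
  ext ⟨i, j⟩ ⟨k, l⟩
  simp only [kroneckerSum, sub_apply, add_apply, kroneckerMap_apply, mul_sub, add_sub_assoc]

variable [Fintype a] [Fintype b]

lemma commute_kronecker_one_one_kronecker [CommSemiring R] (A : Matrix a a R) (B : Matrix b b R) :
    Commute (A ⊗ₖ (1 : Matrix b b R)) ((1 : Matrix a a R) ⊗ₖ B) := by
  simp only [Commute, SemiconjBy, ← mul_kronecker_mul, one_mul, mul_one]

lemma trace_kronecker_mul_kroneckerSum [CommSemiring R] (X A : Matrix a a R)
    (Y B : Matrix b b R) :
    trace ((X ⊗ₖ Y) * kroneckerSum A B) = trace (X * A) * trace Y + trace X * trace (Y * B) := by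
  rw [kroneckerSum, mul_add, ← mul_kronecker_mul, ← mul_kronecker_mul, trace_add,
    trace_kronecker, trace_kronecker, mul_one, mul_one]

end KroneckerSum

lemma trace_commutator_mul_of_commute {R n : Type*} [CommRing R] [Fintype n]
    (H : Matrix n n R) {A K : Matrix n n R} (hAK : Commute A K) :
    trace ((H * A - A * H) * K) = 0 := by
  rw [sub_mul, trace_sub, mul_assoc, hAK.eq, mul_assoc, trace_mul_comm A, mul_assoc, sub_self]

end Matrix

section KroneckerExp

variable {a b : Type*} [Fintype a] [Fintype b] [DecidableEq a] [DecidableEq b]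

variable (b) in
def kroneckerOneRingHom : Matrix a a ℂ →+* Matrix (a × b) (a × b) ℂ where
  toFun A := A ⊗ₖ (1 : Matrix b b ℂ)
  map_one' := one_kronecker_one
  map_mul' A B := by rw [← mul_kronecker_mul, one_mul]
  map_zero' := zero_kronecker _
  map_add' A B := add_kronecker A B _

variable (a) in
def oneKroneckerRingHom : Matrix b b ℂ →+* Matrix (a × b) (a × b) ℂ where
  toFun B := (1 : Matrix a a ℂ) ⊗ₖ B
  map_one' := one_kronecker_one
  map_mul' A B := by rw [← mul_kronecker_mul, one_mul]
  map_zero' := kronecker_zero _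
  map_add' A B := kronecker_add _ A B

open scoped Matrix.Norms.Operator

lemma exp_kroneckerSum (A : Matrix a a ℂ) (B : Matrix b b ℂ) :
    NormedSpace.exp (kroneckerSum A B) = NormedSpace.exp A ⊗ₖ NormedSpace.exp B := by
  have hleft : NormedSpace.exp (A ⊗ₖ (1 : Matrix b b ℂ)) = NormedSpace.exp A ⊗ₖ 1 :=
    (NormedSpace.map_exp (kroneckerOneRingHom b)
      (continuous_matrix fun _ _ => by
        simp only [kroneckerOneRingHom, RingHom.coe_mk, MonoidHom.coe_mk, OneHom.coe_mk,
          kroneckerMap_apply]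
        fun_prop) A).symm
  have hright : NormedSpace.exp ((1 : Matrix a a ℂ) ⊗ₖ B) = 1 ⊗ₖ NormedSpace.exp B :=
    (NormedSpace.map_exp (oneKroneckerRingHom a)
      (continuous_matrix fun _ _ => by
        simp only [oneKroneckerRingHom, RingHom.coe_mk, MonoidHom.coe_mk, OneHom.coe_mk,
          kroneckerMap_apply]
        fun_prop) B).symm
  rw [kroneckerSum, exp_add_of_commute _ _ (commute_kronecker_one_one_kronecker A B), hleft,
    hright, ← mul_kronecker_mul, mul_one, one_mul]

end KroneckerExp

section KroneckerLog

variable {a b : Type*} [Fintype a] [Fintype b] [DecidableEq a] [DecidableEq b]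

lemma Matrix.PosDef.mlog_kronecker {A : Matrix a a ℂ} {B : Matrix b b ℂ}
    (hA : A.PosDef) (hB : B.PosDef) : mlog (A ⊗ₖ B) = kroneckerSum (mlog A) (mlog B) := by
  conv_lhs => rw [← hA.exp_mlog, ← hB.exp_mlog, ← exp_kroneckerSum]
  exact ((isHermitian_mlog A).kroneckerSum (isHermitian_mlog B)).mlog_exp

lemma Matrix.PosDef.mlog_one_kronecker {B : Matrix b b ℂ} (hB : B.PosDef) :
    mlog ((1 : Matrix a a ℂ) ⊗ₖ B) = (1 : Matrix a a ℂ) ⊗ₖ mlog B := by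
  rw [PosDef.one.mlog_kronecker hB, kroneckerSum, mlog_one, zero_kronecker, zero_add]

end KroneckerLog

theorem entropy_production_product_state_general
    {a b : Type*} [Fintype a] [Fintype b] [DecidableEq a] [DecidableEq b]
    [Nonempty a]
    (H : Matrix a a ℂ)
    (L : Matrix b b ℂ →ₗ[ℂ] Matrix b b ℂ)
    (hL : ∀ X : Matrix b b ℂ, Matrix.trace (L X) = 0)
    (η : Matrix a a ℂ) (hη : η.PosDef) (hηtr : Matrix.trace η = 1)
    (ρ τ : Matrix b b ℂ) (hρ : ρ.PosDef)
    (hτ : τ.PosDef) :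
    -(Matrix.trace
        ((-(Complex.I) • ((H ⊗ₖ (1 : Matrix b b ℂ)) * (η ⊗ₖ ρ) -
            (η ⊗ₖ ρ) * (H ⊗ₖ (1 : Matrix b b ℂ))) + η ⊗ₖ (L ρ)) *
          (mlog (η ⊗ₖ ρ) -
            mlog ((1 / (Fintype.card a : ℝ)) •
              ((1 : Matrix a a ℂ) ⊗ₖ τ))))).re =
      -(Matrix.trace ((L ρ) * (mlog ρ - mlog τ))).re := by
  set c : ℝ := 1 / (Fintype.card a : ℝ)
  have hc : 0 < c := one_div_pos.mpr (Nat.cast_pos.mpr Fintype.card_pos)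
  have hlog : mlog (η ⊗ₖ ρ) - mlog (c • ((1 : Matrix a a ℂ) ⊗ₖ τ)) =
      kroneckerSum (mlog η) (mlog ρ - mlog (c • τ)) := by
    rw [← kronecker_smul, (hτ.smul hc).mlog_one_kronecker, hη.mlog_kronecker hρ,
      kroneckerSum_sub_one_kronecker]
  have hcomm : (H ⊗ₖ (1 : Matrix b b ℂ)) * (η ⊗ₖ ρ) - (η ⊗ₖ ρ) * (H ⊗ₖ (1 : Matrix b b ℂ)) =
      (H * η - η * H) ⊗ₖ ρ := by
    rw [← mul_kronecker_mul, ← mul_kronecker_mul, one_mul, mul_one, sub_kronecker]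
  have hscalar : trace (L ρ * (mlog ρ - mlog (c • τ))) = trace (L ρ * (mlog ρ - mlog τ)) := by
    rw [hτ.mlog_smul hc, sub_add_eq_sub_sub_swap, mul_sub, trace_sub, mul_smul_comm, mul_one,
      trace_smul, hL, smul_zero, sub_zero]
  rw [hlog, hcomm, add_mul, trace_add, smul_mul_assoc, trace_smul,
    trace_kronecker_mul_kroneckerSum, trace_kronecker_mul_kroneckerSum,
    trace_commutator_mul_of_commute H (commute_mlog_self η).symm, trace_sub, trace_mul_comm H,
    sub_self, hL, hηtr, hscalar]
  simp only [zero_mul, mul_zero, zero_add, smul_zero, one_mul]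

/-- **Key identity in the proof of Theorem 4.1, part 1.**  For the Lindbladian
`𝓛_*(·) = −i[H ⊗ I, ·] + (I ⊗ L_*)(·)` applied to a product state `η ⊗ ρ`, the
entropy production with reference state `(I/d_a) ⊗ τ` equals the entropy
production of the system-B semigroup at `ρ`. -/
theorem entropy_production_product_state
    {a b : Type*} [Fintype a] [Fintype b] [DecidableEq a] [DecidableEq b]
    [Nonempty a] [Nonempty b]
    (H : Matrix a a ℂ) (hH : H.IsHermitian)
    (L : Matrix b b ℂ →ₗ[ℂ] Matrix b b ℂ)
    (hL : ∀ X : Matrix b b ℂ, Matrix.trace (L X) = 0)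
    (η : Matrix a a ℂ) (hη : η.PosDef) (hηtr : Matrix.trace η = 1)
    (ρ τ : Matrix b b ℂ) (hρ : ρ.PosDef) (hρtr : Matrix.trace ρ = 1)
    (hτ : τ.PosDef) (hτtr : Matrix.trace τ = 1) :
    -(Matrix.trace
        ((-(Complex.I) • ((H ⊗ₖ (1 : Matrix b b ℂ)) * (η ⊗ₖ ρ) -
            (η ⊗ₖ ρ) * (H ⊗ₖ (1 : Matrix b b ℂ))) + η ⊗ₖ (L ρ)) *
          (mlog (η ⊗ₖ ρ) -
            mlog ((1 / (Fintype.card a : ℝ)) •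
              ((1 : Matrix a a ℂ) ⊗ₖ τ))))).re =
      -(Matrix.trace ((L ρ) * (mlog ρ - mlog τ))).re :=
  entropy_production_product_state_general H L hL η hη hηtr ρ τ hρ hτ
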